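/- arXiv:2012.08365 — 7 statements merged into one kernel-verified Lean document; each statement's English description precedes it below -/
import Mathlib

section
/- Let ω be a circle in the Euclidean plane with center O, let A and B be distinct points on ω, and let M be the midpoint of the chord AB. Let CD and EF be two other chords of ω passing through M (so C, D, E, F lie on ω, M lies on the line CD and on the line EF), with C and F lying on opposite sides of the line AB. If G is the intersection point of line CF with line AB and H is the intersection point of line DE with line AB, then M is the midpoint of the segment GH. -/
/-!
Put `M` at the origin and let `η` be a linear form vanishing on `AB`. If a chord through `M`
has endpoints `p` and `s • p`, the power of `M` gives `1 + 1/s = 2 ⟪p, M - O⟫ / (r² - OM²)`;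
since `M - O ⊥ AB`, in the plane this equals `κ · η p` with `κ` independent of the chord.
Intersecting the cross-lines `CF` and `DE` with `ker η` then gives `G - M` and `H - M` as the
same vector divided by opposite scalars.
-/

open scoped InnerProductSpace
open Module

section Pencil

variable {k V : Type*} [Field k] [AddCommGroup V] [Module k V]

theorem exists_sub_eq_smul_sub_of_collinear {M C D : V} (h : Collinear k {C, D, M})
    (hC : C ≠ M) : ∃ s : k, D - M = s • (C - M) := by
  have hD : D ∈ line[k, M, C] :=
    h.mem_affineSpan_of_mem_of_ne (by simp) (by simp) (by simp) hC.symm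
  rw [← vsub_vadd D M, vadd_left_mem_affineSpan_pair] at hD
  obtain ⟨s, hs⟩ := hD
  exact ⟨s, hs.symm⟩

theorem smul_sub_eq_of_collinear (η : V →ₗ[k] k) {M P Q X : V} (h : Collinear k {P, Q, X})
    (hX : η (X - M) = 0) :
    (η (P - M) - η (Q - M)) • (X - M) = η (P - M) • (Q - M) - η (Q - M) • (P - M) := by
  obtain ⟨v, hv⟩ := (collinear_iff_of_mem (p₀ := P) (by simp)).1 h
  obtain ⟨a, rfl⟩ := hv Q (by simp)
  obtain ⟨b, rfl⟩ := hv X (by simp)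
  simp only [vadd_eq_add, add_sub_assoc, map_add, map_smul, smul_eq_mul] at hX ⊢
  linear_combination (norm := module) -(hX • (a • v))

theorem add_eq_zero_of_smul_sub_eq (η : V →ₗ[k] k) {p q g h : V} {s t c l : k} (hc : c ≠ 0)
    (hpq : η p ≠ η q) (hs : (1 + s) * c = s * l * η p) (ht : (1 + t) * c = t * l * η q)
    (hg : (η p - η q) • g = η p • q - η q • p)
    (hh : (η (s • p) - η (t • q)) • h = η (s • p) • (t • q) - η (t • q) • (s • p)) :
    g + h = 0 := by
  have hs0 : s ≠ 0 := by rintro rfl; simp [hc] at hs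
  have ht0 : t ≠ 0 := by rintro rfl; simp [hc] at ht
  have hst : s * η p - t * η q = -(s * t * (η p - η q)) := mul_left_cancel₀ hc <| by
    linear_combination s * η p * ht - t * η q * hs
  simp only [map_smul, smul_eq_mul, hst] at hh
  have : (s * t * (η p - η q)) • (g + h) = 0 := by
    linear_combination (norm := module) (s * t) • hg - hh
  exact (smul_eq_zero.1 this).resolve_left (by simp [hs0, ht0, sub_eq_zero, hpq])

theorem ne_of_smul_sub_eq (η : V →ₗ[k] k) {p q g : V} (hg : (η p - η q) • g = η p • q - η q • p)
    (hp : η p ≠ 0) (hpq : p ≠ q) : η p ≠ η q := by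
  intro h
  rw [h, sub_self, zero_smul, ← smul_sub, eq_comm, smul_eq_zero, sub_eq_zero] at hg
  exact hg.elim (h ▸ hp) hpq.symm

theorem eq_midpoint_of_sub_add_sub_eq_zero [Invertible (2 : k)] {M G H : V}
    (h : (G - M) + (H - M) = 0) : M = midpoint k G H := by
  rw [eq_comm, midpoint_eq_iff, AffineEquiv.pointReflection_apply, vsub_eq_sub, vadd_eq_add]
  linear_combination (norm := module) -h

end Pencil

theorem sq_sub_dist_midpoint_sq {V P : Type*} [NormedAddCommGroup V] [InnerProductSpace ℝ V]
    [MetricSpace P] [NormedAddTorsor V P] {O A B : P} {r : ℝ} (hA : dist A O = r)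
    (hB : dist B O = r) : r ^ 2 - dist (midpoint ℝ A B) O ^ 2 = (dist A B / 2) ^ 2 := by
  have := EuclideanGeometry.dist_sq_add_dist_sq_eq_two_mul_dist_midpoint_sq_add_half_dist_sq O A B
  rw [dist_comm O A, dist_comm O B, dist_comm O, hA, hB] at this
  linarith

section Chord

variable {V : Type*} [NormedAddCommGroup V] [InnerProductSpace ℝ V]

theorem inner_sub_midpoint_sub_eq_zero {O A B : V} (h : dist A O = dist B O) :
    ⟪B - A, midpoint ℝ A B - O⟫_ℝ = 0 := by
  rw [real_inner_comm]
  exact EuclideanGeometry.inner_vsub_vsub_of_dist_eq_of_dist_eq h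
    (dist_left_midpoint_eq_dist_right_midpoint A B)

theorem one_add_mul_eq_of_chord {O M C D : V} {r s : ℝ} (hC : dist C O = r) (hD : dist D O = r)
    (hCD : C ≠ D) (hs : D - M = s • (C - M)) :
    (1 + s) * (r ^ 2 - dist M O ^ 2) = 2 * s * ⟪C - M, M - O⟫_ℝ := by
  have hC' : ‖C - M‖ ^ 2 + 2 * ⟪C - M, M - O⟫_ℝ + ‖M - O‖ ^ 2 = r ^ 2 := by
    rw [← hC, dist_eq_norm, ← sub_add_sub_cancel C M O, norm_add_sq_real]
  have hD' : s ^ 2 * ‖C - M‖ ^ 2 + 2 * s * ⟪C - M, M - O⟫_ℝ + ‖M - O‖ ^ 2 = r ^ 2 := by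
    rw [← hD, dist_eq_norm, ← sub_add_sub_cancel D M O, hs, norm_add_sq_real, norm_smul,
      real_inner_smul_left, mul_pow, Real.norm_eq_abs, sq_abs]
    ring
  have hs1 : s - 1 ≠ 0 := by
    rintro hs1
    rw [sub_eq_zero.1 hs1, one_smul, sub_left_inj] at hs
    exact hCD hs.symm
  have hsecond : (1 + s) * ‖C - M‖ ^ 2 + 2 * ⟪C - M, M - O⟫_ℝ = 0 := mul_left_cancel₀ hs1 <| by
    linear_combination hD' - hC'
  rw [dist_eq_norm]
  linear_combination hsecond - (1 + s) * hC'

end Chord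

namespace Orientation

variable {V : Type*} [NormedAddCommGroup V] [InnerProductSpace ℝ V] [Fact (finrank ℝ V = 2)]
  (o : Orientation ℝ V (Fin 2))

local notation "ω" => o.areaForm

theorem areaForm_eq_zero_iff_mem_span_singleton {w z : V} (hw : w ≠ 0) :
    ω w z = 0 ↔ z ∈ ℝ ∙ w := by
  rw [Submodule.mem_span_singleton]
  refine ⟨fun h => ⟨⟪w, z⟫_ℝ / ‖w‖ ^ 2, ?_⟩, ?_⟩
  · have hw2 : ‖w‖ ^ 2 ≠ 0 := by positivity
    rw [div_eq_inv_mul, mul_smul, inv_smul_eq_iff₀ hw2]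
    refine ext_inner_right ℝ fun y => ?_
    have := o.inner_mul_inner_add_areaForm_mul_areaForm w z y
    rw [h, zero_mul, add_zero] at this
    rw [real_inner_smul_left, real_inner_smul_left, this]
  · rintro ⟨a, rfl⟩
    simp

theorem areaForm_sub_eq_zero_iff_mem {A B X Z : V} (hAB : A ≠ B) (hX : X ∈ line[ℝ, A, B]) :
    ω (B - A) (Z - X) = 0 ↔ Z ∈ line[ℝ, A, B] := by
  rw [o.areaForm_eq_zero_iff_mem_span_singleton (sub_ne_zero.2 hAB.symm),
    ← AffineSubspace.vsub_right_mem_direction_iff_mem hX, direction_affineSpan,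
    vectorSpan_pair_rev]
  rfl

theorem one_add_mul_eq_areaForm_mul_of_chord {O M C D w : V} {r s : ℝ}
    (hw : ⟪w, M - O⟫_ℝ = 0) (hC : dist C O = r) (hD : dist D O = r) (hCD : C ≠ D)
    (hs : D - M = s • (C - M)) :
    (1 + s) * ((r ^ 2 - dist M O ^ 2) * ‖w‖ ^ 2) = s * (2 * ω w (M - O)) * ω w (C - M) := by
  have hchord := one_add_mul_eq_of_chord hC hD hCD hs
  have hnormal := o.inner_mul_inner_add_areaForm_mul_areaForm w (M - O) (C - M)
  rw [hw, zero_mul, zero_add, real_inner_comm] at hnormal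
  linear_combination ‖w‖ ^ 2 * hchord - 2 * s * hnormal

end Orientation

/-- **Butterfly Theorem.** Let `M` be the midpoint of a chord `AB` of a circle with
center `O` and radius `r`, and let `CD` and `EF` be two other chords through `M`,
with `C` and `F` on opposite sides of line `AB`.  If line `CF` meets line `AB` at `G`
and line `DE` meets line `AB` at `H`, then `M` is the midpoint of `GH`. -/
theorem butterfly_theorem
    (O A B C D E F G H M : EuclideanSpace ℝ (Fin 2)) (r : ℝ)
    (hA : dist A O = r) (hB : dist B O = r) (hAB : A ≠ B)
    (hC : dist C O = r) (hD : dist D O = r) (hCD : C ≠ D)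
    (hE : dist E O = r) (hF : dist F O = r) (hEF : E ≠ F)
    (hM : M = midpoint ℝ A B)
    (hMCD : Collinear ℝ ({C, D, M} : Set (EuclideanSpace ℝ (Fin 2))))
    (hMEF : Collinear ℝ ({E, F, M} : Set (EuclideanSpace ℝ (Fin 2))))
    (hopp : (affineSpan ℝ ({A, B} : Set (EuclideanSpace ℝ (Fin 2)))).SOppSide C F)
    (hGCF : Collinear ℝ ({C, F, G} : Set (EuclideanSpace ℝ (Fin 2))))
    (hGAB : Collinear ℝ ({A, B, G} : Set (EuclideanSpace ℝ (Fin 2))))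
    (hHDE : Collinear ℝ ({D, E, H} : Set (EuclideanSpace ℝ (Fin 2))))
    (hHAB : Collinear ℝ ({A, B, H} : Set (EuclideanSpace ℝ (Fin 2)))) :
    M = midpoint ℝ G H := by
  have : Fact (finrank ℝ (EuclideanSpace ℝ (Fin 2)) = 2) := ⟨finrank_euclideanSpace_fin⟩
  let o : Orientation ℝ (EuclideanSpace ℝ (Fin 2)) (Fin 2) :=
    (EuclideanSpace.basisFun (Fin 2) ℝ).toBasis.orientation
  set η := o.areaForm (B - A)
  have hMAB : M ∈ line[ℝ, A, B] := hM ▸ AffineMap.lineMap_mem_affineSpan_pair _ _ _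
  have hline (Z : EuclideanSpace ℝ (Fin 2)) : η (Z - M) = 0 ↔ Z ∈ line[ℝ, A, B] :=
    o.areaForm_sub_eq_zero_iff_mem hAB hMAB
  have hCη : η (C - M) ≠ 0 := mt (hline C).1 hopp.left_notMem
  have hFη : η (F - M) ≠ 0 := mt (hline F).1 hopp.right_notMem
  obtain ⟨s, hs⟩ := exists_sub_eq_smul_sub_of_collinear hMCD (by rintro rfl; simp at hCη)
  obtain ⟨t, ht⟩ := exists_sub_eq_smul_sub_of_collinear (Set.insert_comm E F {M} ▸ hMEF)
    (by rintro rfl; simp at hFη)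
  have hG := smul_sub_eq_of_collinear η hGCF <|
    (hline G).2 (hGAB.mem_affineSpan_of_mem_of_ne (by simp) (by simp) (by simp) hAB)
  have hH := smul_sub_eq_of_collinear η hHDE <|
    (hline H).2 (hHAB.mem_affineSpan_of_mem_of_ne (by simp) (by simp) (by simp) hAB)
  rw [hs, ht] at hH
  have hCF := ne_of_smul_sub_eq η hG hCη <|
    sub_left_injective.ne fun h => AffineSubspace.not_sOppSide_self _ _ (h ▸ hopp)
  have hperp := hM ▸ inner_sub_midpoint_sub_eq_zero (hA.trans hB.symm)
  have hc : (r ^ 2 - dist M O ^ 2) * ‖B - A‖ ^ 2 ≠ 0 := by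
    rw [hM, sq_sub_dist_midpoint_sq hA hB, ← dist_eq_norm, dist_comm B A]
    have := dist_pos.2 hAB
    positivity
  exact eq_midpoint_of_sub_add_sub_eq_zero <| add_eq_zero_of_smul_sub_eq η hc hCF
    (o.one_add_mul_eq_areaForm_mul_of_chord hperp hC hD hCD hs)
    (o.one_add_mul_eq_areaForm_mul_of_chord hperp hF hE hEF.symm ht) hG hH
end

section
/- Let ABCD be a quadrilateral inscribed in a circle ω with center O (A, B, C, D are pairwise distinct points on ω), and let P be the intersection point of the diagonals AC and BD, with P ≠ O. Let the line through P perpendicular to OP meet the line AB at Q and the line CD at R (assume these intersections exist). Then P is the midpoint of the segment QR. -/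
open scoped InnerProductSpace
open Module

/-!
Measure everything from `P` and write `x_X = ⟪X - P, O - P⟫`. A point `Q` of line `AB` with
`x_Q = 0` satisfies `(x_A - x_B) • (Q - P) = x_A • (B - P) - x_B • (A - P)`.
As `C - P = s • (A - P)` and `D - P = t • (B - P)`, the same identity for `R` on `CD` reads
`(s x_A - t x_B) • (R - P) = s t • (x_A • (B - P) - x_B • (A - P))`, and the power of the
point `P` gives `s x_A - t x_B = -s t (x_A - x_B)`, whence `Q - P = -(R - P)`. The plane is
needed only to exclude `x_A = x_B`, which would put `A`, `B`, `C` on the perpendicular to `OP`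
through `P`.
-/

section

variable {V : Type*} [NormedAddCommGroup V] [InnerProductSpace ℝ V]

theorem exists_sub_eq_smul_sub_of_collinear_s1 {a c p : V} (h : Collinear ℝ {a, c, p})
    (hap : a ≠ p) : ∃ s : ℝ, c - p = s • (a - p) := by
  have hc : c ∈ line[ℝ, p, a] :=
    h.mem_affineSpan_of_mem_of_ne (by simp) (by simp) (by simp) hap.symm
  rw [← vsub_vadd c p, vadd_left_mem_affineSpan_pair] at hc
  obtain ⟨s, hs⟩ := hc
  exact ⟨s, hs.symm⟩

-- Signed intersecting chords `s * ‖a - p‖ ^ 2 = dist p o ^ 2 - r ^ 2`, with `‖a - p‖` eliminated.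
theorem two_mul_inner_eq_of_dist_eq {o p a c : V} {r s : ℝ} (ha : dist a o = r)
    (hc : dist c o = r) (hcs : c - p = s • (a - p)) (hs : s ≠ 1) :
    2 * s * ⟪a - p, o - p⟫_ℝ = (1 + s) * (dist p o ^ 2 - r ^ 2) := by
  have ha' : ‖a - p‖ ^ 2 - 2 * ⟪a - p, o - p⟫_ℝ + ‖o - p‖ ^ 2 = r ^ 2 := by
    rw [← norm_sub_sq_real, sub_sub_sub_cancel_right, ← dist_eq_norm, ha]
  have hc' : s ^ 2 * ‖a - p‖ ^ 2 - 2 * s * ⟪a - p, o - p⟫_ℝ + ‖o - p‖ ^ 2 = r ^ 2 := by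
    rw [← hc, dist_eq_norm, ← sub_sub_sub_cancel_right c o p, hcs, norm_sub_sq_real (s • (a - p)),
      norm_smul, inner_smul_left, mul_pow, Real.norm_eq_abs, sq_abs, conj_trivial, mul_assoc]
  rw [dist_eq_norm']
  apply mul_left_cancel₀ (sub_ne_zero.2 hs)
  linear_combination hc' - s ^ 2 * ha'

theorem smul_sub_eq_of_collinear_of_inner_eq_zero {p a b q u : V} (h : Collinear ℝ {a, b, q})
    (hq : ⟪q - p, u⟫_ℝ = 0) :
    (⟪a - p, u⟫_ℝ - ⟪b - p, u⟫_ℝ) • (q - p) =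
      ⟪a - p, u⟫_ℝ • (b - p) - ⟪b - p, u⟫_ℝ • (a - p) := by
  rcases eq_or_ne a b with rfl | hab
  · simp
  have hq' : q ∈ line[ℝ, a, b] :=
    h.mem_affineSpan_of_mem_of_ne (by simp) (by simp) (by simp) hab
  rw [← vsub_vadd q a, vadd_left_mem_affineSpan_pair] at hq'
  obtain ⟨α, hα⟩ := hq'
  rw [vsub_eq_sub, vsub_eq_sub] at hα
  have hqp : q - p = (a - p) + α • ((b - p) - (a - p)) := by
    linear_combination (norm := module) -hα
  rw [hqp, inner_add_left, inner_smul_left, inner_sub_left (b - p), conj_trivial] at hq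
  rw [hqp]
  linear_combination (norm := module) hq • ((a - p) - (b - p))

theorem eq_midpoint_of_chords {o p a b c d q e : V} {r s t : ℝ}
    (ha : dist a o = r) (hb : dist b o = r) (hc : dist c o = r) (hd : dist d o = r)
    (hcs : c - p = s • (a - p)) (hdt : d - p = t • (b - p))
    (hs₀ : s ≠ 0) (hs₁ : s ≠ 1) (ht₀ : t ≠ 0) (ht₁ : t ≠ 1)
    (hab : ⟪a - p, o - p⟫_ℝ ≠ ⟪b - p, o - p⟫_ℝ)
    (hq : Collinear ℝ {a, b, q}) (hqo : ⟪q - p, o - p⟫_ℝ = 0)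
    (he : Collinear ℝ {c, d, e}) (heo : ⟪e - p, o - p⟫_ℝ = 0) :
    p = midpoint ℝ q e := by
  have hA := two_mul_inner_eq_of_dist_eq ha hc hcs hs₁
  have hB := two_mul_inner_eq_of_dist_eq hb hd hdt ht₁
  have hQ := smul_sub_eq_of_collinear_of_inner_eq_zero hq hqo
  have hR := smul_sub_eq_of_collinear_of_inner_eq_zero he heo
  rw [hcs, hdt, inner_smul_left, inner_smul_left, conj_trivial, conj_trivial] at hR
  have hden : s * ⟪a - p, o - p⟫_ℝ - t * ⟪b - p, o - p⟫_ℝ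
      = -(s * t) * (⟪a - p, o - p⟫_ℝ - ⟪b - p, o - p⟫_ℝ) := by
    linear_combination ((1 + t) * hA - (1 + s) * hB) / 2
  rw [hden] at hR
  have hsum : (q - p) + (e - p) = 0 := by
    apply smul_right_injective V (mul_ne_zero (mul_ne_zero hs₀ ht₀) (sub_ne_zero.2 hab))
    linear_combination (norm := module) (s * t) • hQ - hR
  rw [eq_comm, midpoint_eq_iff, AffineEquiv.pointReflection_apply, vsub_eq_sub, vadd_eq_add]
  linear_combination (norm := module) -hsum

theorem collinear_of_forall_inner_sub_eq_zero (hV : finrank ℝ V = 2) {s : Set V} {p u : V}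
    (hu : u ≠ 0) (h : ∀ x ∈ s, ⟪x - p, u⟫_ℝ = 0) : Collinear ℝ s := by
  have : Fact (finrank ℝ V = 1 + 1) := ⟨hV⟩
  have : FiniteDimensional ℝ V := .of_fact_finrank_eq_succ 1
  refine (collinear_iff_finrank_le_one.2 ?_).subset (Set.subset_insert p s)
  calc finrank ℝ (vectorSpan ℝ (insert p s)) ≤ finrank ℝ (ℝ ∙ u)ᗮ := by
        refine Submodule.finrank_mono ?_
        rw [vectorSpan_eq_span_vsub_set_right ℝ (Set.mem_insert p s), Submodule.span_le]
        rintro _ ⟨x, hx | hx, rfl⟩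
        · simp [hx]
        · refine Submodule.mem_orthogonal_singleton_iff_inner_right.2 ?_
          rw [real_inner_comm]
          exact h x hx
    _ = 1 := Submodule.finrank_orthogonal_span_singleton hu

theorem inner_sub_ne_of_not_collinear (hV : finrank ℝ V = 2) {o p a b c q : V} {s : ℝ}
    (hop : o ≠ p) (habc : ¬Collinear ℝ {a, b, c}) (hab : a ≠ b) (hcs : c - p = s • (a - p))
    (hq : Collinear ℝ {a, b, q}) (hqo : ⟪q - p, o - p⟫_ℝ = 0) :
    ⟪a - p, o - p⟫_ℝ ≠ ⟪b - p, o - p⟫_ℝ := by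
  intro h
  have hQ := smul_sub_eq_of_collinear_of_inner_eq_zero hq hqo
  rw [h, sub_self, zero_smul, ← smul_sub, sub_sub_sub_cancel_right, eq_comm, smul_eq_zero] at hQ
  have hb : ⟪b - p, o - p⟫_ℝ = 0 := hQ.resolve_right (sub_ne_zero.2 hab.symm)
  refine habc (collinear_of_forall_inner_sub_eq_zero hV (p := p) (sub_ne_zero.2 hop) ?_)
  rintro x (rfl | rfl | rfl)
  · rw [h, hb]
  · exact hb
  · rw [hcs, inner_smul_left, h, hb, mul_zero]

end

theorem butterfly_cyclic_quadrilateral_general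
    (O A B C D P Q R : EuclideanSpace ℝ (Fin 2)) (r : ℝ)
    (hA : dist A O = r) (hB : dist B O = r) (hC : dist C O = r) (hD : dist D O = r)
    (hAB : A ≠ B) (hAC : A ≠ C) (hBD : B ≠ D)
    (hABC : ¬ Collinear ℝ ({A, B, C} : Set (EuclideanSpace ℝ (Fin 2))))
    (hABD : ¬ Collinear ℝ ({A, B, D} : Set (EuclideanSpace ℝ (Fin 2))))
    (hACD : ¬ Collinear ℝ ({A, C, D} : Set (EuclideanSpace ℝ (Fin 2))))
    (hBCD : ¬ Collinear ℝ ({B, C, D} : Set (EuclideanSpace ℝ (Fin 2))))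
    (hPAC : Collinear ℝ ({A, C, P} : Set (EuclideanSpace ℝ (Fin 2))))
    (hPBD : Collinear ℝ ({B, D, P} : Set (EuclideanSpace ℝ (Fin 2))))
    (hPO : P ≠ O)
    (hQAB : Collinear ℝ ({A, B, Q} : Set (EuclideanSpace ℝ (Fin 2))))
    (hQperp : ⟪Q - P, O - P⟫_ℝ = 0)
    (hRCD : Collinear ℝ ({C, D, R} : Set (EuclideanSpace ℝ (Fin 2))))
    (hRperp : ⟪R - P, O - P⟫_ℝ = 0) :
    P = midpoint ℝ Q R := by
  have hAP : A ≠ P := by rintro rfl; exact hABD (hPBD.subset (by simp [Set.insert_subset_iff]))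
  have hBP : B ≠ P := by rintro rfl; exact hABC (hPAC.subset (by simp [Set.insert_subset_iff]))
  have hCP : C ≠ P := by rintro rfl; exact hBCD (hPBD.subset (by simp [Set.insert_subset_iff]))
  have hDP : D ≠ P := by rintro rfl; exact hACD hPAC
  obtain ⟨s, hs⟩ := exists_sub_eq_smul_sub_of_collinear_s1 hPAC hAP
  obtain ⟨t, ht⟩ := exists_sub_eq_smul_sub_of_collinear_s1 hPBD hBP
  refine eq_midpoint_of_chords hA hB hC hD hs ht ?_ ?_ ?_ ?_
    (inner_sub_ne_of_not_collinear finrank_euclideanSpace_fin hPO.symm hABC hAB hs hQAB hQperp)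
    hQAB hQperp hRCD hRperp
  · rintro rfl; exact hCP (by simpa [sub_eq_zero] using hs)
  · rintro rfl; exact hAC (by simpa [sub_left_inj] using hs.symm)
  · rintro rfl; exact hDP (by simpa [sub_eq_zero] using ht)
  · rintro rfl; exact hBD (by simpa [sub_left_inj] using ht.symm)

/-- **Butterfly Theorem for cyclic quadrilateral.** Let `ABCD` be a quadrilateral
inscribed in a circle with center `O` and radius `r`, and let `P` be the intersection
of the diagonals `AC` and `BD`, with `P ≠ O`.  The line through `P` perpendicular to
`OP` meets line `AB` at `Q` and line `CD` at `R`.  Then `P` is the midpoint of `QR`. -/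
theorem butterfly_cyclic_quadrilateral
    (O A B C D P Q R : EuclideanSpace ℝ (Fin 2)) (r : ℝ)
    (hA : dist A O = r) (hB : dist B O = r) (hC : dist C O = r) (hD : dist D O = r)
    (hAB : A ≠ B) (hAC : A ≠ C) (hAD : A ≠ D) (hBC : B ≠ C) (hBD : B ≠ D) (hCD : C ≠ D)
    (hABC : ¬ Collinear ℝ ({A, B, C} : Set (EuclideanSpace ℝ (Fin 2))))
    (hABD : ¬ Collinear ℝ ({A, B, D} : Set (EuclideanSpace ℝ (Fin 2))))
    (hACD : ¬ Collinear ℝ ({A, C, D} : Set (EuclideanSpace ℝ (Fin 2))))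
    (hBCD : ¬ Collinear ℝ ({B, C, D} : Set (EuclideanSpace ℝ (Fin 2))))
    (hPAC : Collinear ℝ ({A, C, P} : Set (EuclideanSpace ℝ (Fin 2))))
    (hPBD : Collinear ℝ ({B, D, P} : Set (EuclideanSpace ℝ (Fin 2))))
    (hPO : P ≠ O)
    (hQAB : Collinear ℝ ({A, B, Q} : Set (EuclideanSpace ℝ (Fin 2))))
    (hQperp : ⟪Q - P, O - P⟫_ℝ = 0)
    (hRCD : Collinear ℝ ({C, D, R} : Set (EuclideanSpace ℝ (Fin 2))))
    (hRperp : ⟪R - P, O - P⟫_ℝ = 0) :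
    P = midpoint ℝ Q R :=
  butterfly_cyclic_quadrilateral_general O A B C D P Q R r hA hB hC hD hAB hAC hBD hABC hABD hACD
    hBCD hPAC hPBD hPO hQAB hQperp hRCD hRperp
end

section
/- Let ABCD be an arbitrary quadrilateral in the Euclidean plane whose diagonals AC and BD meet at a point P. Let X be the intersection point of the perpendicular bisectors of the segments AC and BD, let Y be the intersection point of the perpendicular bisectors of the segments AB and CD, and let Z be the intersection point of the perpendicular bisectors of the segments AD and BC (assume each pair of perpendicular bisectors is non-parallel, so these points exist). Let W = Y + Z − X, so that XYWZ is a parallelogram, and assume W ≠ P. Let the line through P perpendicular to the line PW meet line AD at Q and line BC at R (assume these intersections exist). Then P is the midpoint of the segment QR. -/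
/-!
Put the origin at `P = AC ∩ BD` and write `A = P - p u`, `C = P + (1 - p) u`, `B = P - q v`,
`D = P + (1 - q) v`. Every point `O` on the perpendicular bisector of a segment `UV` satisfies the
linear equation `2 ⟪O - P, V - U⟫ = ‖V - P‖² - ‖U - P‖²`, and a fixed polynomial combination of the
six equations defining `X`, `Y`, `Z` shows that `W - P = (Y - P) + (Z - P) - (X - P)` is orthogonal to
`M = p(1-p)(1-2q) u - q(1-q)(1-2p) v`. In the plane the line through `P` perpendicular to `PW` is
therefore the line through `P` in direction `M`, and solving for its intersections with `AD` and
`BC` gives `P ± M / (p + q - 1)`.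
-/

open scoped InnerProductSpace

section Collinear

variable {k V : Type*} [Field k] [AddCommGroup V] [Module k V]

theorem exists_eq_add_smul_sub_of_collinear {A B C : V} (h : Collinear k ({A, B, C} : Set V))
    (hAB : A ≠ B) : ∃ t : k, C = A + t • (B - A) := by
  have hC : C ∈ line[k, A, B] := h.mem_affineSpan_of_mem_of_ne (by simp) (by simp) (by simp) hAB
  obtain ⟨t, ht⟩ := mem_affineSpan_pair_iff_exists_lineMap_eq.1 hC
  exact ⟨t, by rw [← ht, AffineMap.lineMap_apply_module', add_comm]⟩

theorem exists_eq_sub_smul_and_eq_add_smul_of_collinear {A C P : V}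
    (h : Collinear k ({A, C, P} : Set V)) (hAC : A ≠ C) :
    ∃ (p : k) (u : V), A = P - p • u ∧ C = P + (1 - p) • u := by
  obtain ⟨p, rfl⟩ := exists_eq_add_smul_sub_of_collinear h hAC
  exact ⟨p, C - A, by abel, by module⟩

end Collinear

section InnerProductSpace

variable {V : Type*} [NormedAddCommGroup V] [InnerProductSpace ℝ V]

theorem dist_eq_dist_iff_two_mul_inner {O U W : V} (P : V) :
    dist O U = dist O W ↔ 2 * ⟪O - P, (W - P) - (U - P)⟫_ℝ = ‖W - P‖ ^ 2 - ‖U - P‖ ^ 2 := by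
  have hU : O - U = (O - P) - (U - P) := by abel
  have hW : O - W = (O - P) - (W - P) := by abel
  rw [dist_eq_norm, dist_eq_norm, hU, hW, ← sq_eq_sq₀ (norm_nonneg _) (norm_nonneg _),
    norm_sub_sq_real (O - P), norm_sub_sq_real (O - P), inner_sub_right (O - P) (W - P)]
  constructor <;> intro h <;> linarith

theorem dist_add_eq_dist_add_of_inner_eq_zero {O X Y J : V} (h : dist O X = dist O Y)
    (hJ : ⟪J, Y - X⟫_ℝ = 0) : dist (O + J) X = dist (O + J) Y := by
  rw [dist_eq_dist_iff_two_mul_inner O] at h ⊢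
  rw [add_sub_cancel_left, sub_sub_sub_cancel_right, hJ]
  simpa using h

def butterflyDirection (u v : V) (p q : ℝ) : V :=
  (p * (1 - p) * (1 - 2 * q)) • u - (q * (1 - q) * (1 - 2 * p)) • v

theorem inner_butterflyDirection_add_sub_sub_eq_zero {A B C D P X Y Z u v : V} {p q : ℝ}
    (hA : A = P - p • u) (hC : C = P + (1 - p) • u) (hB : B = P - q • v)
    (hD : D = P + (1 - q) • v)
    (hX : dist X A = dist X C ∧ dist X B = dist X D)
    (hY : dist Y A = dist Y B ∧ dist Y C = dist Y D)
    (hZ : dist Z A = dist Z D ∧ dist Z B = dist Z C) :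
    ⟪butterflyDirection u v p q, Y + Z - X - P⟫_ℝ = 0 := by
  subst hA hB hC hD
  simp only [dist_eq_dist_iff_two_mul_inner P, sub_sub_cancel_left, add_sub_cancel_left,
    norm_neg, norm_smul, Real.norm_eq_abs, mul_pow, sq_abs, inner_sub_right,
    inner_smul_right, inner_neg_right] at hX hY hZ
  obtain ⟨hX₁, hX₂⟩ := hX
  obtain ⟨hY₁, hY₂⟩ := hY
  obtain ⟨hZ₁, hZ₂⟩ := hZ
  rw [real_inner_comm, show Y + Z - X - P = (Y - P) + (Z - P) - (X - P) by abel,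
    butterflyDirection]
  generalize X - P = x at *
  generalize Y - P = y at *
  generalize Z - P = z at *
  simp only [inner_sub_left, inner_add_left, inner_sub_right, inner_smul_right]
  linear_combination (1/2 * (1 - p) * (1 - q)) * hY₁ + (1/2 * p * q) * hY₂
    - (1/2 * q * (1 - p)) * hZ₁ + (1/2 * p * (1 - q)) * hZ₂
    - (1/2 * p * (1 - p) * (1 - 2 * q)) * hX₁ + (1/2 * q * (1 - q) * (1 - 2 * p)) * hX₂

end InnerProductSpace

def cross (x y : EuclideanSpace ℝ (Fin 2)) : ℝ := x 0 * y 1 - x 1 * y 0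

section Plane

variable {A B C D O P Q R U U' W W' n u v x y : EuclideanSpace ℝ (Fin 2)}

theorem inner_fin_two (x y : EuclideanSpace ℝ (Fin 2)) : ⟪x, y⟫_ℝ = x 0 * y 0 + x 1 * y 1 := by
  simp [PiLp.inner_apply, Fin.sum_univ_two, mul_comm]

theorem cross_eq_zero_of_inner_eq_zero (hn : n ≠ 0) (hx : ⟪x, n⟫_ℝ = 0) (hy : ⟪y, n⟫_ℝ = 0) :
    cross x y = 0 := by
  rw [inner_fin_two] at hx hy
  have h₀ : n 0 * cross x y = 0 := by unfold cross; linear_combination y 1 * hx - x 1 * hy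
  have h₁ : n 1 * cross x y = 0 := by unfold cross; linear_combination x 0 * hy - y 0 * hx
  by_contra hc
  exact hn (by ext i; fin_cases i <;> simp_all)

theorem exists_smul_eq_of_cross_eq_zero (hx : x ≠ 0) (h : cross x y = 0) : ∃ r : ℝ, y = r • x := by
  unfold cross at h
  by_cases hx₀ : x 0 = 0
  · have hx₁ : x 1 ≠ 0 := fun hx₁ ↦ hx (by ext i; fin_cases i <;> simpa)
    refine ⟨y 1 / x 1, ?_⟩
    ext i; fin_cases i <;> simp <;> field_simp
    linear_combination -h
  · refine ⟨y 0 / x 0, ?_⟩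
    ext i; fin_cases i <;> simp <;> field_simp
    linear_combination h

theorem collinear_of_cross_sub_eq_zero (h : cross (B - A) (C - A) = 0) :
    Collinear ℝ ({A, B, C} : Set (EuclideanSpace ℝ (Fin 2))) := by
  rcases eq_or_ne B A with rfl | hBA
  · simpa using collinear_pair ℝ B C
  obtain ⟨r, hr⟩ := exists_smul_eq_of_cross_eq_zero (sub_ne_zero.2 hBA) h
  rw [collinear_iff_of_mem (Set.mem_insert A _)]
  refine ⟨B - A, ?_⟩
  simp only [Set.mem_insert_iff, Set.mem_singleton_iff, forall_eq_or_imp, forall_eq, vadd_eq_add]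
  exact ⟨⟨0, by simp⟩, ⟨1, by simp⟩, ⟨r, by rw [← hr]; abel⟩⟩

theorem cross_sub_ne_zero_of_not_collinear
    (h : ¬ Collinear ℝ ({A, B, C} : Set (EuclideanSpace ℝ (Fin 2)))) :
    cross (B - A) (C - A) ≠ 0 :=
  mt collinear_of_cross_sub_eq_zero h

/-- If `UW ∥ U'W'`, the perpendicular bisectors of `UW` and `U'W'` are parallel, so a common point
can be moved along them by a vector normal to `UW`. -/
theorem cross_sub_ne_zero_of_unique (hU : U ≠ W) (h : dist O U = dist O W)
    (h' : dist O U' = dist O W')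
    (huniq : ∀ O' : EuclideanSpace ℝ (Fin 2),
      dist O' U = dist O' W → dist O' U' = dist O' W' → O' = O) :
    cross (W - U) (W' - U') ≠ 0 := by
  intro hc
  set J : EuclideanSpace ℝ (Fin 2) := !₂[-(W - U) 1, (W - U) 0]
  have hJ (X Y : EuclideanSpace ℝ (Fin 2)) : ⟪J, Y - X⟫_ℝ = cross (W - U) (Y - X) := by
    rw [inner_fin_two]; simp [J, cross]; ring
  have hJ0 : J = 0 := by
    simpa using huniq (O + J)
      (dist_add_eq_dist_add_of_inner_eq_zero h (by rw [hJ]; simp [cross]; ring))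
      (dist_add_eq_dist_add_of_inner_eq_zero h' (by rw [hJ, hc]))
  have h₀ := congrArg (· 0) hJ0
  have h₁ := congrArg (· 1) hJ0
  simp [J] at h₀ h₁
  apply hU
  ext i
  fin_cases i <;> simp <;> linarith

theorem eq_midpoint_of_cross_butterflyDirection_eq_zero {p q t s : ℝ}
    (hA : A = P - p • u) (hC : C = P + (1 - p) • u) (hB : B = P - q • v)
    (hD : D = P + (1 - q) • v)
    (hABC : ¬ Collinear ℝ ({A, B, C} : Set (EuclideanSpace ℝ (Fin 2))))
    (hABD : ¬ Collinear ℝ ({A, B, D} : Set (EuclideanSpace ℝ (Fin 2))))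
    (hACD : ¬ Collinear ℝ ({A, C, D} : Set (EuclideanSpace ℝ (Fin 2))))
    (hBCD : ¬ Collinear ℝ ({B, C, D} : Set (EuclideanSpace ℝ (Fin 2))))
    (hADBC : cross (D - A) (C - B) ≠ 0)
    (hQ : Q = A + t • (D - A)) (hR : R = B + s • (C - B))
    (hQM : cross (Q - P) (butterflyDirection u v p q) = 0)
    (hRM : cross (R - P) (butterflyDirection u v p q) = 0) :
    P = midpoint ℝ Q R := by
  replace hABC := cross_sub_ne_zero_of_not_collinear hABC
  replace hABD := cross_sub_ne_zero_of_not_collinear hABD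
  replace hACD := cross_sub_ne_zero_of_not_collinear hACD
  replace hBCD := cross_sub_ne_zero_of_not_collinear hBCD
  subst hQ hR hA hB hC hD
  simp only [cross, butterflyDirection, PiLp.add_apply, PiLp.sub_apply, PiLp.smul_apply,
    smul_eq_mul] at hABC hABD hACD hBCD hADBC hQM hRM
  set c := u 0 * v 1 - u 1 * v 0
  have hc : c ≠ 0 := right_ne_zero_of_mul (a := q) (by convert hABC using 1; ring)
  have hq₀ : q ≠ 0 := left_ne_zero_of_mul (b := c) (by convert hABC using 1; ring)
  have hp₀ : p ≠ 0 := left_ne_zero_of_mul (b := c) (by convert hABD using 1; ring)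
  have hq₁ : 1 - q ≠ 0 := left_ne_zero_of_mul (b := c) (by convert hACD using 1; ring)
  have hp₁ : 1 - p ≠ 0 := left_ne_zero_of_mul (b := c) (by convert hBCD using 1; ring)
  have hpq : p + q - 1 ≠ 0 := left_ne_zero_of_mul (b := c) (by convert hADBC using 1; ring)
  have ht : t * (p + q - 1) = q * (2 * p - 1) :=
    mul_left_cancel₀ (mul_ne_zero (mul_ne_zero hp₀ hq₁) hc) (by linear_combination hQM)
  have hs : s * (p + q - 1) = p * (2 * q - 1) :=
    mul_left_cancel₀ (mul_ne_zero (mul_ne_zero hq₀ hp₁) hc) (by linear_combination hRM)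
  have hs' : s * (1 - p) = p * (1 - t) :=
    mul_left_cancel₀ hpq (by linear_combination (1 - p) * hs + p * ht)
  have ht' : t * (1 - q) = q * (1 - s) :=
    mul_left_cancel₀ hpq (by linear_combination (1 - q) * ht + q * hs)
  rw [midpoint_eq_smul_add, invOf_eq_inv]
  linear_combination (norm := module) (-(1 / 2 : ℝ)) • (hs' • u + ht' • v)

end Plane

theorem butterfly_second_generalization_general
    (A B C D P X Y Z W Q R : EuclideanSpace ℝ (Fin 2))
    (hAC : A ≠ C) (hAD : A ≠ D) (hBC : B ≠ C) (hBD : B ≠ D)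
    (hABC : ¬ Collinear ℝ ({A, B, C} : Set (EuclideanSpace ℝ (Fin 2))))
    (hABD : ¬ Collinear ℝ ({A, B, D} : Set (EuclideanSpace ℝ (Fin 2))))
    (hACD : ¬ Collinear ℝ ({A, C, D} : Set (EuclideanSpace ℝ (Fin 2))))
    (hBCD : ¬ Collinear ℝ ({B, C, D} : Set (EuclideanSpace ℝ (Fin 2))))
    (hPAC : Collinear ℝ ({A, C, P} : Set (EuclideanSpace ℝ (Fin 2))))
    (hPBD : Collinear ℝ ({B, D, P} : Set (EuclideanSpace ℝ (Fin 2))))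
    -- `X` is the intersection point of the perpendicular bisectors of `AC` and `BD`
    (hX : dist X A = dist X C ∧ dist X B = dist X D)
    -- `Y` is the intersection point of the perpendicular bisectors of `AB` and `CD`
    (hY : dist Y A = dist Y B ∧ dist Y C = dist Y D)
    -- `Z` is the intersection point of the perpendicular bisectors of `AD` and `BC`
    (hZ : dist Z A = dist Z D ∧ dist Z B = dist Z C)
    (hZuniq : ∀ Z' : EuclideanSpace ℝ (Fin 2),
      dist Z' A = dist Z' D → dist Z' B = dist Z' C → Z' = Z)
    (hW : W = Y + Z - X) (hWP : W ≠ P)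
    (hQAD : Collinear ℝ ({A, D, Q} : Set (EuclideanSpace ℝ (Fin 2))))
    (hQperp : ⟪Q - P, W - P⟫_ℝ = 0)
    (hRBC : Collinear ℝ ({B, C, R} : Set (EuclideanSpace ℝ (Fin 2))))
    (hRperp : ⟪R - P, W - P⟫_ℝ = 0) :
    P = midpoint ℝ Q R := by
  obtain ⟨p, u, hA, hC⟩ := exists_eq_sub_smul_and_eq_add_smul_of_collinear hPAC hAC
  obtain ⟨q, v, hB, hD⟩ := exists_eq_sub_smul_and_eq_add_smul_of_collinear hPBD hBD
  obtain ⟨t, hQ⟩ := exists_eq_add_smul_sub_of_collinear hQAD hAD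
  obtain ⟨s, hR⟩ := exists_eq_add_smul_sub_of_collinear hRBC hBC
  have hWM : ⟪butterflyDirection u v p q, W - P⟫_ℝ = 0 := by
    rw [hW]; exact inner_butterflyDirection_add_sub_sub_eq_zero hA hC hB hD hX hY hZ
  have hWP₀ : W - P ≠ 0 := sub_ne_zero.2 hWP
  exact eq_midpoint_of_cross_butterflyDirection_eq_zero hA hC hB hD hABC hABD hACD hBCD
    (cross_sub_ne_zero_of_unique hAD hZ.1 hZ.2 hZuniq) hQ hR
    (cross_eq_zero_of_inner_eq_zero hWP₀ hQperp hWM)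
    (cross_eq_zero_of_inner_eq_zero hWP₀ hRperp hWM)

/-- **The second generalization of the Butterfly Theorem.** Let `ABCD` be an arbitrary
quadrilateral whose diagonals `AC` and `BD` meet at `P`.  The perpendicular bisectors
of `AC` and `BD` meet at `X`, those of `AB` and `CD` meet at `Y`, those of `AD` and
`BC` meet at `Z`; let `W = Y + Z - X`, so that `XYWZ` is a parallelogram, with `W ≠ P`.
The line through `P` perpendicular to `PW` meets line `AD` at `Q` and line `BC` at `R`.
Then `P` is the midpoint of `QR`. -/
theorem butterfly_second_generalization
    (A B C D P X Y Z W Q R : EuclideanSpace ℝ (Fin 2))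
    (hAB : A ≠ B) (hAC : A ≠ C) (hAD : A ≠ D) (hBC : B ≠ C) (hBD : B ≠ D) (hCD : C ≠ D)
    (hABC : ¬ Collinear ℝ ({A, B, C} : Set (EuclideanSpace ℝ (Fin 2))))
    (hABD : ¬ Collinear ℝ ({A, B, D} : Set (EuclideanSpace ℝ (Fin 2))))
    (hACD : ¬ Collinear ℝ ({A, C, D} : Set (EuclideanSpace ℝ (Fin 2))))
    (hBCD : ¬ Collinear ℝ ({B, C, D} : Set (EuclideanSpace ℝ (Fin 2))))
    (hPAC : Collinear ℝ ({A, C, P} : Set (EuclideanSpace ℝ (Fin 2))))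
    (hPBD : Collinear ℝ ({B, D, P} : Set (EuclideanSpace ℝ (Fin 2))))
    -- `X` is the intersection point of the perpendicular bisectors of `AC` and `BD`
    (hX : dist X A = dist X C ∧ dist X B = dist X D)
    (hXuniq : ∀ X' : EuclideanSpace ℝ (Fin 2),
      dist X' A = dist X' C → dist X' B = dist X' D → X' = X)
    -- `Y` is the intersection point of the perpendicular bisectors of `AB` and `CD`
    (hY : dist Y A = dist Y B ∧ dist Y C = dist Y D)
    (hYuniq : ∀ Y' : EuclideanSpace ℝ (Fin 2),
      dist Y' A = dist Y' B → dist Y' C = dist Y' D → Y' = Y)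
    -- `Z` is the intersection point of the perpendicular bisectors of `AD` and `BC`
    (hZ : dist Z A = dist Z D ∧ dist Z B = dist Z C)
    (hZuniq : ∀ Z' : EuclideanSpace ℝ (Fin 2),
      dist Z' A = dist Z' D → dist Z' B = dist Z' C → Z' = Z)
    (hW : W = Y + Z - X) (hWP : W ≠ P)
    (hQAD : Collinear ℝ ({A, D, Q} : Set (EuclideanSpace ℝ (Fin 2))))
    (hQperp : ⟪Q - P, W - P⟫_ℝ = 0)
    (hRBC : Collinear ℝ ({B, C, R} : Set (EuclideanSpace ℝ (Fin 2))))
    (hRperp : ⟪R - P, W - P⟫_ℝ = 0) :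
    P = midpoint ℝ Q R :=
  butterfly_second_generalization_general A B C D P X Y Z W Q R hAC hAD hBC hBD hABC hABD hACD hBCD
    hPAC hPBD hX hY hZ hZuniq hW hWP hQAD hQperp hRBC hRperp
end

section
/- Let ABCD be an arbitrary quadrilateral in the Euclidean plane (A, B, C, D pairwise distinct, no three collinear). Let X be the intersection point of the perpendicular bisectors of segments AB and CD, and let Y be the intersection point of the perpendicular bisectors of segments BC and DA (assume each pair of perpendicular bisectors is non-parallel). Let M be the midpoint of the diagonal AC and N the midpoint of the diagonal BD, with M ≠ N and X ≠ Y. Then the line XY is perpendicular to the Newton line MN of ABCD. -/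
open scoped InnerProductSpace

/-- **Lemma (AMM Problem 12147).** Let `ABCD` be an arbitrary quadrilateral.  The
perpendicular bisectors of `AB` and `CD` meet at `X`, and the perpendicular bisectors
of `BC` and `DA` meet at `Y`.  Then the line `XY` is perpendicular to the Newton line
of `ABCD`, i.e. the line through the midpoints `M` of `AC` and `N` of `BD`. -/
theorem perpBisector_intersections_perp_newton_line
    (A B C D X Y M N : EuclideanSpace ℝ (Fin 2))
    (hAB : A ≠ B) (hAC : A ≠ C) (hAD : A ≠ D) (hBC : B ≠ C) (hBD : B ≠ D) (hCD : C ≠ D)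
    (hABC : ¬ Collinear ℝ ({A, B, C} : Set (EuclideanSpace ℝ (Fin 2))))
    (hABD : ¬ Collinear ℝ ({A, B, D} : Set (EuclideanSpace ℝ (Fin 2))))
    (hACD : ¬ Collinear ℝ ({A, C, D} : Set (EuclideanSpace ℝ (Fin 2))))
    (hBCD : ¬ Collinear ℝ ({B, C, D} : Set (EuclideanSpace ℝ (Fin 2))))
    -- `X` is the intersection point of the perpendicular bisectors of `AB` and `CD`
    (hX : dist X A = dist X B ∧ dist X C = dist X D)
    (hXuniq : ∀ X' : EuclideanSpace ℝ (Fin 2),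
      dist X' A = dist X' B → dist X' C = dist X' D → X' = X)
    -- `Y` is the intersection point of the perpendicular bisectors of `BC` and `DA`
    (hY : dist Y B = dist Y C ∧ dist Y D = dist Y A)
    (hYuniq : ∀ Y' : EuclideanSpace ℝ (Fin 2),
      dist Y' B = dist Y' C → dist Y' D = dist Y' A → Y' = Y)
    (hM : M = midpoint ℝ A C) (hN : N = midpoint ℝ B D)
    (hMN : M ≠ N) (hXY : X ≠ Y) :
    ⟪Y - X, N - M⟫_ℝ = 0 := by
  have sq1 : ‖X - A‖^2 = ‖X - B‖^2 := by rw [← dist_eq_norm, ← dist_eq_norm, hX.1]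
  have sq2 : ‖X - C‖^2 = ‖X - D‖^2 := by rw [← dist_eq_norm, ← dist_eq_norm, hX.2]
  have sq3 : ‖Y - B‖^2 = ‖Y - C‖^2 := by rw [← dist_eq_norm, ← dist_eq_norm, hY.1]
  have sq4 : ‖Y - D‖^2 = ‖Y - A‖^2 := by rw [← dist_eq_norm, ← dist_eq_norm, hY.2]
  rw [norm_sub_sq_real, norm_sub_sq_real] at sq1 sq2 sq3 sq4
  have hexp : N - M = ((1:ℝ)/2) • ((B - A) + (D - C)) := by
    rw [hM, hN, midpoint_eq_smul_add, midpoint_eq_smul_add]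
    simp only [invOf_eq_inv]
    module
  rw [hexp, real_inner_smul_right]
  simp only [inner_sub_left, inner_add_right, inner_sub_right]
  linarith [sq1, sq2, sq3, sq4]
end

section
/- Let ABCD and PQRS be two quadrilaterals in the Euclidean plane such that line PQ is perpendicular to line AB, line QR is perpendicular to line BC, line RS is perpendicular to line CD, line SP is perpendicular to line DA, line PR is perpendicular to line BD, and line SQ is perpendicular to line AC. Let J be the intersection point of lines PQ and RS, and let K be the intersection point of lines QR and SP (assume these intersections exist and J ≠ K). Let M be the midpoint of AC and N the midpoint of BD, with M ≠ N. Then the line JK is perpendicular to the Newton line MN of ABCD. -/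
open scoped InnerProductSpace

lemma collinear_inner_eq_zero {X Y Z w : EuclideanSpace ℝ (Fin 2)}
    (h : Collinear ℝ ({X, Y, Z} : Set (EuclideanSpace ℝ (Fin 2))))
    (hXY : X ≠ Y) (h0 : ⟪Y - X, w⟫_ℝ = 0) : ⟪Z - X, w⟫_ℝ = 0 := by
  obtain ⟨v, hv⟩ := (collinear_iff_of_mem (by simp : X ∈ ({X, Y, Z} : Set _))).1 h
  obtain ⟨rY, hY⟩ := hv Y (by simp)
  obtain ⟨rZ, hZ⟩ := hv Z (by simp)
  have hrY : rY ≠ 0 := by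
    rintro rfl; apply hXY; simp [hY]
  have hvw : ⟪v, w⟫_ℝ = 0 := by
    have : ⟪(rY • v : EuclideanSpace ℝ (Fin 2)), w⟫_ℝ = 0 := by
      have : Y - X = rY • v := by rw [hY, vadd_eq_add]; abel
      rwa [← this]
    rw [real_inner_smul_left] at this
    exact (mul_eq_zero.1 this).resolve_left hrY
  have : Z - X = rZ • v := by rw [hZ, vadd_eq_add]; abel
  rw [this, real_inner_smul_left, hvw, mul_zero]

/-- **Lemma 2.** Let `ABCD` and `PQRS` be two quadrilaterals such that
`PQ ⊥ AB`, `QR ⊥ BC`, `RS ⊥ CD`, `SP ⊥ DA`, `PR ⊥ BD` and `SQ ⊥ AC`.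
Let `J` be the intersection of lines `PQ` and `RS`, and `K` the intersection of lines
`QR` and `SP`.  Then the line `JK` is perpendicular to the Newton line of `ABCD`,
i.e. the line through the midpoints `M` of `AC` and `N` of `BD`. -/
theorem orthologic_quadrilateral_perp_newton_line
    (A B C D P Q R S J K M N : EuclideanSpace ℝ (Fin 2))
    (hAB : A ≠ B) (hAC : A ≠ C) (hAD : A ≠ D) (hBC : B ≠ C) (hBD : B ≠ D) (hCD : C ≠ D)
    (hABC : ¬ Collinear ℝ ({A, B, C} : Set (EuclideanSpace ℝ (Fin 2))))
    (hABD : ¬ Collinear ℝ ({A, B, D} : Set (EuclideanSpace ℝ (Fin 2))))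
    (hACD : ¬ Collinear ℝ ({A, C, D} : Set (EuclideanSpace ℝ (Fin 2))))
    (hBCD : ¬ Collinear ℝ ({B, C, D} : Set (EuclideanSpace ℝ (Fin 2))))
    (hPQ : P ≠ Q) (hPR : P ≠ R) (hPS : P ≠ S) (hQR : Q ≠ R) (hQS : Q ≠ S) (hRS : R ≠ S)
    (hPQR : ¬ Collinear ℝ ({P, Q, R} : Set (EuclideanSpace ℝ (Fin 2))))
    (hPQS : ¬ Collinear ℝ ({P, Q, S} : Set (EuclideanSpace ℝ (Fin 2))))
    (hPRS : ¬ Collinear ℝ ({P, R, S} : Set (EuclideanSpace ℝ (Fin 2))))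
    (hQRS : ¬ Collinear ℝ ({Q, R, S} : Set (EuclideanSpace ℝ (Fin 2))))
    (h1 : ⟪Q - P, B - A⟫_ℝ = 0)
    (h2 : ⟪R - Q, C - B⟫_ℝ = 0)
    (h3 : ⟪S - R, D - C⟫_ℝ = 0)
    (h4 : ⟪P - S, A - D⟫_ℝ = 0)
    (h5 : ⟪R - P, D - B⟫_ℝ = 0)
    (h6 : ⟪Q - S, C - A⟫_ℝ = 0)
    (hJ1 : Collinear ℝ ({P, Q, J} : Set (EuclideanSpace ℝ (Fin 2))))
    (hJ2 : Collinear ℝ ({R, S, J} : Set (EuclideanSpace ℝ (Fin 2))))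
    (hK1 : Collinear ℝ ({Q, R, K} : Set (EuclideanSpace ℝ (Fin 2))))
    (hK2 : Collinear ℝ ({S, P, K} : Set (EuclideanSpace ℝ (Fin 2))))
    (hJK : J ≠ K)
    (hM : M = midpoint ℝ A C) (hN : N = midpoint ℝ B D) (hMN : M ≠ N) :
    ⟪K - J, N - M⟫_ℝ = 0 := by
  -- orthogonality relations inherited by `J` and `K`
  have e1 : ⟪J - P, B - A⟫_ℝ = 0 := collinear_inner_eq_zero hJ1 hPQ h1
  have e2 : ⟪J - R, D - C⟫_ℝ = 0 := collinear_inner_eq_zero hJ2 hRS h3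
  have e3 : ⟪K - Q, C - B⟫_ℝ = 0 := collinear_inner_eq_zero hK1 hQR h2
  have e4 : ⟪K - S, A - D⟫_ℝ = 0 := collinear_inner_eq_zero hK2 hPS.symm h4
  have hNM : N - M = (2⁻¹ : ℝ) • ((B + D) - (A + C)) := by
    rw [hM, hN, midpoint_eq_smul_add, midpoint_eq_smul_add]
    simp only [invOf_eq_inv, smul_sub]
  rw [hNM, real_inner_smul_right]
  have key : ⟪K - J, (B + D) - (A + C)⟫_ℝ = 0 := by
    simp only [inner_sub_left, inner_sub_right, inner_add_left, inner_add_right] at e1 e2 e3 e4 h1 h3 h6 ⊢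
    linarith
  rw [key, mul_zero]
end

section
/- Let ABCD be an arbitrary quadrilateral in the Euclidean plane whose diagonals AC and BD meet at a point P. Let O_a, O_b, O_c, O_d be the circumcenters of triangles BCD, CDA, DAB, ABC respectively (each triple being non-collinear). Then ⟪P − O_a, P − O_c⟫ · ⟪P − A, P − C⟫ = ⟪P − O_b, P − O_d⟫ · ⟪P − B, P − D⟫, where ⟪·,·⟫ denotes the inner product of vectors; equivalently, the ratio of the power of P with respect to the circle with diameter O_aO_c to its power with respect to the circle with diameter O_bO_d equals (PB·PD)/(PA·PC) as a ratio of signed products along the diagonals. -/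
open scoped InnerProductSpace

private lemma aux_inner (v w : EuclideanSpace ℝ (Fin 2)) (a b c d : ℝ) :
    ⟪a • v + b • w, c • v + d • w⟫_ℝ
      = a*c*⟪v,v⟫_ℝ + (a*d+b*c)*⟪v,w⟫_ℝ + b*d*⟪w,w⟫_ℝ := by
  simp [inner_add_left, inner_add_right, real_inner_smul_left, real_inner_smul_right,
    real_inner_comm w v]
  ring

private lemma aux_gram (v w : EuclideanSpace ℝ (Fin 2)) (hvw : LinearIndependent ℝ ![v, w]) :
    ⟪v,v⟫_ℝ * ⟪w,w⟫_ℝ - ⟪v,w⟫_ℝ^2 ≠ 0 := by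
  intro h
  rw [linearIndependent_fin2] at hvw
  obtain ⟨hw, hvw'⟩ := hvw
  simp only [Matrix.cons_val_one, Matrix.head_cons, Matrix.cons_val_zero] at hw hvw'
  have hW : ⟪w,w⟫_ℝ ≠ 0 := fun h0 => hw (inner_self_eq_zero.mp h0)
  have hcomm : ⟪v,w⟫_ℝ = ⟪w,v⟫_ℝ := real_inner_comm w v
  have hu : ⟪w,w⟫_ℝ • v - ⟪v,w⟫_ℝ • w = 0 := by
    have h2 : ⟪⟪w,w⟫_ℝ • v - ⟪v,w⟫_ℝ • w, ⟪w,w⟫_ℝ • v - ⟪v,w⟫_ℝ • w⟫_ℝ = 0 := by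
      simp only [inner_sub_left, inner_sub_right, real_inner_smul_left, real_inner_smul_right]
      linear_combination ⟪w,w⟫_ℝ * h + ⟪w,w⟫_ℝ * ⟪v,w⟫_ℝ * hcomm
    exact inner_self_eq_zero.mp h2
  apply hvw' (⟪v,w⟫_ℝ / ⟪w,w⟫_ℝ)
  have h3 : ⟪v,w⟫_ℝ • w = ⟪w,w⟫_ℝ • v := by
    linear_combination (norm := module) (-1 : ℝ) • hu
  rw [div_eq_inv_mul, mul_smul, h3, inv_smul_smul₀ hW]

private lemma aux_span (v w : EuclideanSpace ℝ (Fin 2)) (hvw : LinearIndependent ℝ ![v, w])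
    (X : EuclideanSpace ℝ (Fin 2)) : ∃ p q : ℝ, p • v + q • w = X := by
  have hspan := hvw.span_eq_top_of_card_eq_finrank (by simp)
  have hX : X ∈ Submodule.span ℝ (Set.range ![v, w]) := by rw [hspan]; trivial
  rw [show Set.range ![v, w] = {v, w} by ext y; simp [Fin.exists_fin_two]; tauto] at hX
  exact Submodule.mem_span_pair.mp hX

private theorem aux_key (t s V W g xa ya xb yb xc yc xd yd : ℝ)
    (ht0 : t ≠ 0) (ht1 : 1 - t ≠ 0) (hs0 : s ≠ 0) (hs1 : 1 - s ≠ 0)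
    (hDel : V*W - g^2 ≠ 0)
    (Ra1 : (2*V + 2*s*g + (-2)*t*V) * xa + (2*g + 2*s*W + (-2)*t*g) * ya = (V + (-1)*s^2*W + (-2)*t*V + t^2*V))
    (Ra2 : (2*g + (-2)*V + (-2)*s*g + 2*t*V) * xa + ((-2)*g + 2*W + (-2)*s*W + 2*t*g) * ya = (W + (-1)*V + (-2)*s*W + s^2*W + 2*t*V + (-1)*t^2*V))
    (Rb1 : (2*g + (-2)*V + (-2)*s*g + 2*t*V) * xb + ((-2)*g + 2*W + (-2)*s*W + 2*t*g) * yb = (W + (-1)*V + (-2)*s*W + s^2*W + 2*t*V + (-1)*t^2*V))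
    (Rb2 : ((-2)*g + 2*s*g + (-2)*t*V) * xb + ((-2)*W + 2*s*W + (-2)*t*g) * yb = ((-1)*W + 2*s*W + (-1)*s^2*W + t^2*V))
    (Rc1 : ((-2)*g + 2*s*g + (-2)*t*V) * xc + ((-2)*W + 2*s*W + (-2)*t*g) * yc = ((-1)*W + 2*s*W + (-1)*s^2*W + t^2*V))
    (Rc2 : ((-2)*s*g + 2*t*V) * xc + ((-2)*s*W + 2*t*g) * yc = (s^2*W + (-1)*t^2*V))
    (Rd1 : ((-2)*s*g + 2*t*V) * xd + ((-2)*s*W + 2*t*g) * yd = (s^2*W + (-1)*t^2*V))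
    (Rd2 : (2*V + 2*s*g + (-2)*t*V) * xd + (2*g + 2*s*W + (-2)*t*g) * yd = (V + (-1)*s^2*W + (-2)*t*V + t^2*V)) :
    (xa*xc*V + (xa*yc+ya*xc)*g + ya*yc*W) * (-(t*(1-t)*V))
      = (xb*xd*V + (xb*yd+yb*xd)*g + yb*yd*W) * (-(s*(1-s)*W)) := by
  have hxa : xa * (4*(1-t)*(V*W-g^2)) = ((-2)*W*g + 2*V*W + 4*s*W*g + (-2)*s*W^2 + 2*s^2*W^2 + 2*t*W*g + (-4)*t*V*W + (-4)*t*s*W*g + 2*t^2*V*W) := by linear_combination ((-2)*g + 2*W + (-2)*s*W + 2*t*g) * Ra1 - (2*g + 2*s*W + (-2)*t*g) * Ra2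
  have hya : ya * (4*(1-t)*(V*W-g^2)) = ((-2)*V*g + 2*V*W + 2*s*W*g + (-4)*s*V*W + (-2)*s^2*W*g + 4*t*V*g + (-2)*t*V*W + 4*t*s*V*W + (-2)*t^2*V*g) := by linear_combination (2*V + 2*s*g + (-2)*t*V) * Ra2 - (2*g + (-2)*V + (-2)*s*g + 2*t*V) * Ra1
  have hxb : xb * (4*(1-s)*(V*W-g^2)) = ((-2)*W*g + 2*V*W + 4*s*W*g + (-2)*s*V*W + (-2)*s^2*W*g + 2*t*V*g + (-4)*t*V*W + 4*t*s*V*W + (-2)*t^2*V*g) := by linear_combination ((-2)*W + 2*s*W + (-2)*t*g) * Rb1 - ((-2)*g + 2*W + (-2)*s*W + 2*t*g) * Rb2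
  have hyb : yb * (4*(1-s)*(V*W-g^2)) = ((-2)*V*g + 2*V*W + 2*s*V*g + (-4)*s*V*W + 2*s^2*V*W + 4*t*V*g + (-2)*t*V^2 + (-4)*t*s*V*g + 2*t^2*V^2) := by linear_combination (2*g + (-2)*V + (-2)*s*g + 2*t*V) * Rb2 - ((-2)*g + 2*s*g + (-2)*t*V) * Rb1
  have hxc : xc * (4*t*(V*W-g^2)) = (2*s*W^2 + (-2)*s^2*W^2 + (-2)*t*W*g + 4*t*s*W*g + (-2)*t^2*V*W) := by linear_combination ((-2)*s*W + 2*t*g) * Rc1 - ((-2)*W + 2*s*W + (-2)*t*g) * Rc2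
  have hyc : yc * (4*t*(V*W-g^2)) = ((-2)*s*W*g + 2*s^2*W*g + 2*t*V*W + (-4)*t*s*V*W + 2*t^2*V*g) := by linear_combination ((-2)*g + 2*s*g + (-2)*t*V) * Rc2 - ((-2)*s*g + 2*t*V) * Rc1
  have hxd : xd * (4*s*(V*W-g^2)) = (2*s*V*W + 2*s^2*W*g + (-2)*t*V*g + (-4)*t*s*V*W + 2*t^2*V*g) := by linear_combination (2*g + 2*s*W + (-2)*t*g) * Rd1 - ((-2)*s*W + 2*t*g) * Rd2
  have hyd : yd * (4*s*(V*W-g^2)) = ((-2)*s*V*g + (-2)*s^2*V*W + 2*t*V^2 + 4*t*s*V*g + (-2)*t^2*V^2) := by linear_combination ((-2)*s*g + 2*t*V) * Rd2 - (2*V + 2*s*g + (-2)*t*V) * Rd1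
  have hXZ : ((4*(1-t)*(V*W-g^2))*(4*t*(V*W-g^2)))*(xa*xc*V + (xa*yc+ya*xc)*g + ya*yc*W) = (((-2)*W*g + 2*V*W + 4*s*W*g + (-2)*s*W^2 + 2*s^2*W^2 + 2*t*W*g + (-4)*t*V*W + (-4)*t*s*W*g + 2*t^2*V*W)*(2*s*W^2 + (-2)*s^2*W^2 + (-2)*t*W*g + 4*t*s*W*g + (-2)*t^2*V*W)*V + (((-2)*W*g + 2*V*W + 4*s*W*g + (-2)*s*W^2 + 2*s^2*W^2 + 2*t*W*g + (-4)*t*V*W + (-4)*t*s*W*g + 2*t^2*V*W)*((-2)*s*W*g + 2*s^2*W*g + 2*t*V*W + (-4)*t*s*V*W + 2*t^2*V*g) + ((-2)*V*g + 2*V*W + 2*s*W*g + (-4)*s*V*W + (-2)*s^2*W*g + 4*t*V*g + (-2)*t*V*W + 4*t*s*V*W + (-2)*t^2*V*g)*(2*s*W^2 + (-2)*s^2*W^2 + (-2)*t*W*g + 4*t*s*W*g + (-2)*t^2*V*W))*g + ((-2)*V*g + 2*V*W + 2*s*W*g + (-4)*s*V*W + (-2)*s^2*W*g + 4*t*V*g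 + (-2)*t*V*W + 4*t*s*V*W + (-2)*t^2*V*g)*((-2)*s*W*g + 2*s^2*W*g + 2*t*V*W + (-4)*t*s*V*W + 2*t^2*V*g)*W) := by
    linear_combination (V*xc*(4*t*(V*W-g^2)) + g*yc*(4*t*(V*W-g^2)))*hxa + (g*xc*(4*t*(V*W-g^2)) + W*yc*(4*t*(V*W-g^2)))*hya + (V*((-2)*W*g + 2*V*W + 4*s*W*g + (-2)*s*W^2 + 2*s^2*W^2 + 2*t*W*g + (-4)*t*V*W + (-4)*t*s*W*g + 2*t^2*V*W) + g*((-2)*V*g + 2*V*W + 2*s*W*g + (-4)*s*V*W + (-2)*s^2*W*g + 4*t*V*g + (-2)*t*V*W + 4*t*s*V*W + (-2)*t^2*V*g))*hxc + (g*((-2)*W*g + 2*V*W + 4*s*W*g + (-2)*s*W^2 + 2*s^2*W^2 + 2*t*W*g + (-4)*t*V*W + (-4)*t*s*W*g + 2*t^2*V*W) + W*((-2)*V*g + 2*V*W + 2*s*W*g + (-4)*s*V*W + (-2)*s^2*W*g + 4*t*V*g + (-2)*t*V*W + 4*t*s*V*W + (-2)*t^2*V*g))*hyc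
  have hYU : ((4*(1-s)*(V*W-g^2))*(4*s*(V*W-g^2)))*(xb*xd*V + (xb*yd+yb*xd)*g + yb*yd*W) = (((-2)*W*g + 2*V*W + 4*s*W*g + (-2)*s*V*W + (-2)*s^2*W*g + 2*t*V*g + (-4)*t*V*W + 4*t*s*V*W + (-2)*t^2*V*g)*(2*s*V*W + 2*s^2*W*g + (-2)*t*V*g + (-4)*t*s*V*W + 2*t^2*V*g)*V + (((-2)*W*g + 2*V*W + 4*s*W*g + (-2)*s*V*W + (-2)*s^2*W*g + 2*t*V*g + (-4)*t*V*W + 4*t*s*V*W + (-2)*t^2*V*g)*((-2)*s*V*g + (-2)*s^2*V*W + 2*t*V^2 + 4*t*s*V*g + (-2)*t^2*V^2) + ((-2)*V*g + 2*V*W + 2*s*V*g + (-4)*s*V*W + 2*s^2*V*W + 4*t*V*g + (-2)*t*V^2 + (-4)*t*s*V*g + 2*t^2*V^2)*(2*s*V*W + 2*s^2*W*g + (-2)*t*V*g + (-4)*t*s*V*W + 2*t^2*V*g))*g + ((-2)*V*g + 2*V*W + 2*s*V*g + (-4)*s*V*W + 2*s^2*V*W + 4*t*V*g + (-2)*t*V^2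 + (-4)*t*s*V*g + 2*t^2*V^2)*((-2)*s*V*g + (-2)*s^2*V*W + 2*t*V^2 + 4*t*s*V*g + (-2)*t^2*V^2)*W) := by
    linear_combination (V*xd*(4*s*(V*W-g^2)) + g*yd*(4*s*(V*W-g^2)))*hxb + (g*xd*(4*s*(V*W-g^2)) + W*yd*(4*s*(V*W-g^2)))*hyb + (V*((-2)*W*g + 2*V*W + 4*s*W*g + (-2)*s*V*W + (-2)*s^2*W*g + 2*t*V*g + (-4)*t*V*W + 4*t*s*V*W + (-2)*t^2*V*g) + g*((-2)*V*g + 2*V*W + 2*s*V*g + (-4)*s*V*W + 2*s^2*V*W + 4*t*V*g + (-2)*t*V^2 + (-4)*t*s*V*g + 2*t^2*V^2))*hxd + (g*((-2)*W*g + 2*V*W + 4*s*W*g + (-2)*s*V*W + (-2)*s^2*W*g + 2*t*V*g + (-4)*t*V*W + 4*t*s*V*W + (-2)*t^2*V*g) + W*((-2)*V*g + 2*V*W + 2*s*V*g + (-4)*s*V*W + 2*s^2*V*W + 4*t*V*g + (-2)*t*V^2 + (-4)*t*s*V*g + 2*t^2*V^2))*hyd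
  have hne : ((4*(1-t)*(V*W-g^2))*(4*(1-s)*(V*W-g^2))*(4*t*(V*W-g^2))*(4*s*(V*W-g^2))) ≠ 0 := by
    apply mul_ne_zero (mul_ne_zero (mul_ne_zero ?_ ?_) ?_) ?_ <;>
      first
        | exact mul_ne_zero (mul_ne_zero (by norm_num) ht1) hDel
        | exact mul_ne_zero (mul_ne_zero (by norm_num) hs1) hDel
        | exact mul_ne_zero (mul_ne_zero (by norm_num) ht0) hDel
        | exact mul_ne_zero (mul_ne_zero (by norm_num) hs0) hDel
  have hfin : ((4*(1-t)*(V*W-g^2))*(4*(1-s)*(V*W-g^2))*(4*t*(V*W-g^2))*(4*s*(V*W-g^2))) *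
      ((xa*xc*V + (xa*yc+ya*xc)*g + ya*yc*W) * (-(t*(1-t)*V))
        - (xb*xd*V + (xb*yd+yb*xd)*g + yb*yd*W) * (-(s*(1-s)*W))) = 0 := by
    linear_combination (-(t*(1-t)*V)*(4*(1-s)*(V*W-g^2))*(4*s*(V*W-g^2)))*hXZ - (-(s*(1-s)*W)*(4*(1-t)*(V*W-g^2))*(4*t*(V*W-g^2)))*hYU
  have := (mul_eq_zero.mp hfin).resolve_left hne
  linarith [this]

set_option maxHeartbeats 2000000 in
/-- The ratio of the power of `P` (the intersection of the diagonals of quadrilateral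
`ABCD`) with respect to the circle with diameter `OaOc` to its power with respect to
the circle with diameter `ObOd` equals the ratio of signed products `PB·PD / PA·PC`,
where `Oa`, `Ob`, `Oc`, `Od` are the circumcenters of triangles `BCD`, `CDA`, `DAB`,
`ABC`.  In product form:
`⟪P - Oa, P - Oc⟫ * ⟪P - A, P - C⟫ = ⟪P - Ob, P - Od⟫ * ⟪P - B, P - D⟫`. -/
theorem power_ratio_at_diagonal_intersection
    (A B C D P Oa Ob Oc Od : EuclideanSpace ℝ (Fin 2))
    (hAB : A ≠ B) (hAC : A ≠ C) (hAD : A ≠ D) (hBC : B ≠ C) (hBD : B ≠ D) (hCD : C ≠ D)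
    (hABC : ¬ Collinear ℝ ({A, B, C} : Set (EuclideanSpace ℝ (Fin 2))))
    (hABD : ¬ Collinear ℝ ({A, B, D} : Set (EuclideanSpace ℝ (Fin 2))))
    (hACD : ¬ Collinear ℝ ({A, C, D} : Set (EuclideanSpace ℝ (Fin 2))))
    (hBCD : ¬ Collinear ℝ ({B, C, D} : Set (EuclideanSpace ℝ (Fin 2))))
    (hPAC : Collinear ℝ ({A, C, P} : Set (EuclideanSpace ℝ (Fin 2))))
    (hPBD : Collinear ℝ ({B, D, P} : Set (EuclideanSpace ℝ (Fin 2))))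
    (hOa : dist Oa B = dist Oa C ∧ dist Oa C = dist Oa D)
    (hOb : dist Ob C = dist Ob D ∧ dist Ob D = dist Ob A)
    (hOc : dist Oc D = dist Oc A ∧ dist Oc A = dist Oc B)
    (hOd : dist Od A = dist Od B ∧ dist Od B = dist Od C) :
    ⟪P - Oa, P - Oc⟫_ℝ * ⟪P - A, P - C⟫_ℝ = ⟪P - Ob, P - Od⟫_ℝ * ⟪P - B, P - D⟫_ℝ := by
  have htr : ∀ X Y Z : EuclideanSpace ℝ (Fin 2), dist X Y = dist X Z →
      ⟪X - Y, X - Y⟫_ℝ = ⟪X - Z, X - Z⟫_ℝ := by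
    intro X Y Z h
    have h' : ‖X - Y‖ = ‖X - Z‖ := by rwa [← dist_eq_norm, ← dist_eq_norm]
    rw [real_inner_self_eq_norm_sq, real_inner_self_eq_norm_sq, h']
  have hPA : P ≠ A := by
    intro h
    apply hABD
    have h2 : ({A, B, D} : Set (EuclideanSpace ℝ (Fin 2))) = {B, D, P} := by
      rw [h]; ext x; simp only [Set.mem_insert_iff, Set.mem_singleton_iff]; tauto
    rw [h2]; exact hPBD
  have hPC : P ≠ C := by
    intro h
    apply hBCD
    have h2 : ({B, C, D} : Set (EuclideanSpace ℝ (Fin 2))) = {B, D, P} := by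
      rw [h]; ext x; simp only [Set.mem_insert_iff, Set.mem_singleton_iff]; tauto
    rw [h2]; exact hPBD
  have hPB : P ≠ B := by
    intro h
    apply hABC
    have h2 : ({A, B, C} : Set (EuclideanSpace ℝ (Fin 2))) = {A, C, P} := by
      rw [h]; ext x; simp only [Set.mem_insert_iff, Set.mem_singleton_iff]; tauto
    rw [h2]; exact hPAC
  have hPD : P ≠ D := by
    intro h
    apply hACD
    have h2 : ({A, C, D} : Set (EuclideanSpace ℝ (Fin 2))) = {A, C, P} := by
      rw [h]
    rw [h2]; exact hPAC
  obtain ⟨t, hPt⟩ : ∃ t : ℝ, P - A = t • (C - A) := by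
    rw [collinear_iff_of_mem (Set.mem_insert A {C, P})] at hPAC
    obtain ⟨v₀, hv₀⟩ := hPAC
    obtain ⟨rC, hrC⟩ := hv₀ C (by simp)
    obtain ⟨rP, hrP⟩ := hv₀ P (by simp)
    have hrC0 : rC ≠ 0 := by
      rintro rfl; simp at hrC; exact hAC hrC.symm
    refine ⟨rP / rC, ?_⟩
    have h1 : C - A = rC • v₀ := by rw [hrC]; simp [vadd_eq_add]
    rw [h1, smul_smul, div_mul_cancel₀ _ hrC0, hrP]; simp [vadd_eq_add]
  obtain ⟨s, hPs⟩ : ∃ s : ℝ, P - B = s • (D - B) := by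
    rw [collinear_iff_of_mem (Set.mem_insert B {D, P})] at hPBD
    obtain ⟨v₀, hv₀⟩ := hPBD
    obtain ⟨rD, hrD⟩ := hv₀ D (by simp)
    obtain ⟨rP, hrP⟩ := hv₀ P (by simp)
    have hrD0 : rD ≠ 0 := by
      rintro rfl; simp at hrD; exact hBD hrD.symm
    refine ⟨rP / rD, ?_⟩
    have h1 : D - B = rD • v₀ := by rw [hrD]; simp [vadd_eq_add]
    rw [h1, smul_smul, div_mul_cancel₀ _ hrD0, hrP]; simp [vadd_eq_add]
  have ht0 : t ≠ 0 := by
    rintro rfl; rw [zero_smul] at hPt; exact hPA (sub_eq_zero.mp hPt)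
  have ht1 : (1 : ℝ) - t ≠ 0 := by
    intro h0
    have h1 : t = 1 := by linarith
    rw [h1, one_smul] at hPt
    exact hPC (sub_left_inj.mp hPt)
  have hs0 : s ≠ 0 := by
    rintro rfl; rw [zero_smul] at hPs; exact hPB (sub_eq_zero.mp hPs)
  have hs1 : (1 : ℝ) - s ≠ 0 := by
    intro h0
    have h1 : s = 1 := by linarith
    rw [h1, one_smul] at hPs
    exact hPD (sub_left_inj.mp hPs)
  have hvw : LinearIndependent ℝ ![C - A, D - B] := by
    rw [linearIndependent_fin2]
    refine ⟨by simpa using sub_ne_zero.mpr (Ne.symm hBD), ?_⟩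
    intro a ha
    simp only [Matrix.cons_val_one, Matrix.head_cons, Matrix.cons_val_zero] at ha
    apply hABC
    rw [collinear_iff_exists_forall_eq_smul_vadd]
    refine ⟨P, D - B, ?_⟩
    intro p hp
    simp only [Set.mem_insert_iff, Set.mem_singleton_iff] at hp
    rcases hp with rfl | rfl | rfl
    · refine ⟨-(t * a), ?_⟩
      have h2 : P - p = (t * a) • (D - B) := by rw [hPt, ← ha, smul_smul]
      rw [vadd_eq_add, neg_smul, ← h2]; abel
    · refine ⟨-s, ?_⟩
      rw [vadd_eq_add, neg_smul, ← hPs]; abel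
    · refine ⟨(1 - t) * a, ?_⟩
      have h2 : p - P = ((1 - t) * a) • (D - B) := by
        linear_combination (norm := module) (-1 : ℝ) • hPt + (-(1-t)) • ha
      rw [vadd_eq_add, ← h2]; abel
  have hDel := aux_gram (C - A) (D - B) hvw
  obtain ⟨xa, ya, hOaP⟩ := aux_span (C - A) (D - B) hvw (Oa - P)
  obtain ⟨xb, yb, hObP⟩ := aux_span (C - A) (D - B) hvw (Ob - P)
  obtain ⟨xc, yc, hOcP⟩ := aux_span (C - A) (D - B) hvw (Oc - P)
  obtain ⟨xd, yd, hOdP⟩ := aux_span (C - A) (D - B) hvw (Od - P)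
  have dOaB : Oa - B = xa • (C - A) + (ya + s) • (D - B) := by
    linear_combination (norm := module) (-1 : ℝ) • hOaP + hPs
  have dOaC : Oa - C = (xa + t - 1) • (C - A) + ya • (D - B) := by
    linear_combination (norm := module) (-1 : ℝ) • hOaP + hPt
  have dOaD : Oa - D = xa • (C - A) + (ya + s - 1) • (D - B) := by
    linear_combination (norm := module) (-1 : ℝ) • hOaP + hPs
  have dObC : Ob - C = (xb + t - 1) • (C - A) + yb • (D - B) := by
    linear_combination (norm := module) (-1 : ℝ) • hObP + hPt
  have dObD : Ob - D = xb • (C - A) + (yb + s - 1) • (D - B) := by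
    linear_combination (norm := module) (-1 : ℝ) • hObP + hPs
  have dObA : Ob - A = (xb + t) • (C - A) + yb • (D - B) := by
    linear_combination (norm := module) (-1 : ℝ) • hObP + hPt
  have dOcD : Oc - D = xc • (C - A) + (yc + s - 1) • (D - B) := by
    linear_combination (norm := module) (-1 : ℝ) • hOcP + hPs
  have dOcA : Oc - A = (xc + t) • (C - A) + yc • (D - B) := by
    linear_combination (norm := module) (-1 : ℝ) • hOcP + hPt
  have dOcB : Oc - B = xc • (C - A) + (yc + s) • (D - B) := by
    linear_combination (norm := module) (-1 : ℝ) • hOcP + hPs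
  have dOdA : Od - A = (xd + t) • (C - A) + yd • (D - B) := by
    linear_combination (norm := module) (-1 : ℝ) • hOdP + hPt
  have dOdB : Od - B = xd • (C - A) + (yd + s) • (D - B) := by
    linear_combination (norm := module) (-1 : ℝ) • hOdP + hPs
  have dOdC : Od - C = (xd + t - 1) • (C - A) + yd • (D - B) := by
    linear_combination (norm := module) (-1 : ℝ) • hOdP + hPt
  have dPOa : P - Oa = (-xa) • (C - A) + (-ya) • (D - B) := by
    linear_combination (norm := module) hOaP
  have dPOb : P - Ob = (-xb) • (C - A) + (-yb) • (D - B) := by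
    linear_combination (norm := module) hObP
  have dPOc : P - Oc = (-xc) • (C - A) + (-yc) • (D - B) := by
    linear_combination (norm := module) hOcP
  have dPOd : P - Od = (-xd) • (C - A) + (-yd) • (D - B) := by
    linear_combination (norm := module) hOdP
  have dPA : P - A = t • (C - A) + (0 : ℝ) • (D - B) := by
    linear_combination (norm := module) hPt
  have dPC : P - C = (t - 1) • (C - A) + (0 : ℝ) • (D - B) := by
    linear_combination (norm := module) hPt
  have dPB : P - B = (0 : ℝ) • (C - A) + s • (D - B) := by
    linear_combination (norm := module) hPs
  have dPD : P - D = (0 : ℝ) • (C - A) + (s - 1) • (D - B) := by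
    linear_combination (norm := module) hPs
  have HOa1 := htr Oa B C hOa.1
  have HOa2 := htr Oa C D hOa.2
  have HOb1 := htr Ob C D hOb.1
  have HOb2 := htr Ob D A hOb.2
  have HOc1 := htr Oc D A hOc.1
  have HOc2 := htr Oc A B hOc.2
  have HOd1 := htr Od A B hOd.1
  have HOd2 := htr Od B C hOd.2
  rw [dOaB, dOaC, aux_inner, aux_inner] at HOa1
  rw [dOaC, dOaD, aux_inner, aux_inner] at HOa2
  rw [dObC, dObD, aux_inner, aux_inner] at HOb1
  rw [dObD, dObA, aux_inner, aux_inner] at HOb2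
  rw [dOcD, dOcA, aux_inner, aux_inner] at HOc1
  rw [dOcA, dOcB, aux_inner, aux_inner] at HOc2
  rw [dOdA, dOdB, aux_inner, aux_inner] at HOd1
  rw [dOdB, dOdC, aux_inner, aux_inner] at HOd2
  rw [dPOa, dPOc, dPOb, dPOd, dPA, dPC, dPB, dPD, aux_inner, aux_inner, aux_inner, aux_inner]
  linear_combination aux_key t s ⟪C - A, C - A⟫_ℝ ⟪D - B, D - B⟫_ℝ ⟪C - A, D - B⟫_ℝ
      xa ya xb yb xc yc xd yd ht0 ht1 hs0 hs1 hDel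
      (by linear_combination HOa1) (by linear_combination HOa2)
      (by linear_combination HOb1) (by linear_combination HOb2)
      (by linear_combination HOc1) (by linear_combination HOc2)
      (by linear_combination HOd1) (by linear_combination HOd2)
end

section
/- Let ABCD be an arbitrary quadrilateral in the Euclidean plane (A, B, C, D pairwise distinct, no three collinear). Let F be the intersection point of lines BC and DA, and let G be the intersection point of lines CD and AB (assume these pairs of lines are non-parallel and F ≠ G). Let O_a, O_b, O_c, O_d be the circumcenters of triangles BCD, CDA, DAB, ABC respectively, let M be the midpoint of segment O_aO_c and N the midpoint of segment O_bO_d, with M ≠ N. Then the line FG is perpendicular to the line MN (the Newton line of the quadrilateral O_aO_bO_cO_d). -/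
open scoped InnerProductSpace

private lemma collin_param {X Y P : EuclideanSpace ℝ (Fin 2)}
    (h : Collinear ℝ ({X, Y, P} : Set (EuclideanSpace ℝ (Fin 2)))) (hXY : X ≠ Y) :
    ∃ s : ℝ, P - X = s • (Y - X) := by
  rw [collinear_iff_of_mem (Set.mem_insert X _)] at h
  obtain ⟨v, hv⟩ := h
  obtain ⟨r1, hr1⟩ := hv Y (by simp)
  obtain ⟨r2, hr2⟩ := hv P (by simp)
  have hY : Y - X = r1 • v := by rw [hr1]; simp [vadd_eq_add]
  have hP : P - X = r2 • v := by rw [hr2]; simp [vadd_eq_add]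
  have hr1ne : r1 ≠ 0 := by
    rintro rfl
    apply hXY
    have h0 : Y - X = 0 := by simp [hY]
    exact (sub_eq_zero.mp h0).symm
  refine ⟨r2 / r1, ?_⟩
  rw [hP, hY, smul_smul]
  congr 1
  field_simp

private lemma pow_param {O X Y P : EuclideanSpace ℝ (Fin 2)} {s : ℝ}
    (h : ⟪X - O, X - O⟫_ℝ = ⟪Y - O, Y - O⟫_ℝ)
    (hP : P - X = s • (Y - X)) :
    ⟪P - O, P - O⟫_ℝ - ⟪X - O, X - O⟫_ℝ = (s ^ 2 - s) * ⟪Y - X, Y - X⟫_ℝ := by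
  have hP' : P = s • (Y - X) + X := by rw [← hP]; abel
  subst hP'
  simp only [inner_sub_left, inner_sub_right, inner_add_left, inner_add_right,
    real_inner_smul_left, real_inner_smul_right]
  simp only [inner_sub_left, inner_sub_right] at h
  linear_combination (-s) * h

private lemma dist_to_inner {O X Y : EuclideanSpace ℝ (Fin 2)} (h : dist O X = dist O Y) :
    ⟪X - O, X - O⟫_ℝ = ⟪Y - O, Y - O⟫_ℝ := by
  rw [real_inner_self_eq_norm_sq, real_inner_self_eq_norm_sq,
    norm_sub_rev X, norm_sub_rev Y, ← dist_eq_norm, ← dist_eq_norm, h]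

/-- Let `ABCD` be an arbitrary quadrilateral; let `F` be the intersection of lines
`BC` and `DA`, and `G` the intersection of lines `CD` and `AB`.  Let `Oa`, `Ob`,
`Oc`, `Od` be the circumcenters of triangles `BCD`, `CDA`, `DAB`, `ABC`, and let `M`,
`N` be the midpoints of `OaOc` and `ObOd`.  Then the line `FG` is perpendicular to
the line `MN` (the Newton line of the quadrilateral `OaObOcOd`). -/
theorem diagonal_triangle_side_perp_newton_line_of_circumcenters
    (A B C D F G Oa Ob Oc Od M N : EuclideanSpace ℝ (Fin 2))
    (hAB : A ≠ B) (hAC : A ≠ C) (hAD : A ≠ D) (hBC : B ≠ C) (hBD : B ≠ D) (hCD : C ≠ D)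
    (hABC : ¬ Collinear ℝ ({A, B, C} : Set (EuclideanSpace ℝ (Fin 2))))
    (hABD : ¬ Collinear ℝ ({A, B, D} : Set (EuclideanSpace ℝ (Fin 2))))
    (hACD : ¬ Collinear ℝ ({A, C, D} : Set (EuclideanSpace ℝ (Fin 2))))
    (hBCD : ¬ Collinear ℝ ({B, C, D} : Set (EuclideanSpace ℝ (Fin 2))))
    (hFBC : Collinear ℝ ({B, C, F} : Set (EuclideanSpace ℝ (Fin 2))))
    (hFDA : Collinear ℝ ({D, A, F} : Set (EuclideanSpace ℝ (Fin 2))))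
    (hGCD : Collinear ℝ ({C, D, G} : Set (EuclideanSpace ℝ (Fin 2))))
    (hGAB : Collinear ℝ ({A, B, G} : Set (EuclideanSpace ℝ (Fin 2))))
    (hFG : F ≠ G)
    (hOa : dist Oa B = dist Oa C ∧ dist Oa C = dist Oa D)
    (hOb : dist Ob C = dist Ob D ∧ dist Ob D = dist Ob A)
    (hOc : dist Oc D = dist Oc A ∧ dist Oc A = dist Oc B)
    (hOd : dist Od A = dist Od B ∧ dist Od B = dist Od C)
    (hM : M = midpoint ℝ Oa Oc) (hN : N = midpoint ℝ Ob Od) (hMN : M ≠ N) :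
    ⟪G - F, N - M⟫_ℝ = 0 := by
  obtain ⟨s, hs⟩ := collin_param hFBC hBC
  obtain ⟨t, ht⟩ := collin_param hFDA hAD.symm
  obtain ⟨u, hu⟩ := collin_param hGCD hCD
  obtain ⟨v, hv⟩ := collin_param hGAB hAB
  -- equidistance in inner-product form
  have fa1 : ⟪B - Oa, B - Oa⟫_ℝ = ⟪C - Oa, C - Oa⟫_ℝ := dist_to_inner hOa.1
  have fa2 : ⟪C - Oa, C - Oa⟫_ℝ = ⟪D - Oa, D - Oa⟫_ℝ := dist_to_inner hOa.2
  have fb1 : ⟪C - Ob, C - Ob⟫_ℝ = ⟪D - Ob, D - Ob⟫_ℝ := dist_to_inner hOb.1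
  have fb2 : ⟪D - Ob, D - Ob⟫_ℝ = ⟪A - Ob, A - Ob⟫_ℝ := dist_to_inner hOb.2
  have fc1 : ⟪D - Oc, D - Oc⟫_ℝ = ⟪A - Oc, A - Oc⟫_ℝ := dist_to_inner hOc.1
  have fc2 : ⟪A - Oc, A - Oc⟫_ℝ = ⟪B - Oc, B - Oc⟫_ℝ := dist_to_inner hOc.2
  have fd1 : ⟪A - Od, A - Od⟫_ℝ = ⟪B - Od, B - Od⟫_ℝ := dist_to_inner hOd.1
  have fd2 : ⟪B - Od, B - Od⟫_ℝ = ⟪C - Od, C - Od⟫_ℝ := dist_to_inner hOd.2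
  -- powers of F and G w.r.t. the four circles
  have pFa := pow_param fa1 hs
  have pFd := pow_param fd2 hs
  have pFb := pow_param fb2 ht
  have pFc := pow_param fc1 ht
  have pGa := pow_param fa2 hu
  have pGb := pow_param fb1 hu
  have pGc := pow_param fc2 hv
  have pGd := pow_param fd1 hv
  -- combine the pairs to eliminate the parameters s, t, u, v
  have qF1 : ⟪F - Oa, F - Oa⟫_ℝ - ⟪B - Oa, B - Oa⟫_ℝ
      = ⟪F - Od, F - Od⟫_ℝ - ⟪B - Od, B - Od⟫_ℝ := by linarith [pFa, pFd]
  have qF2 : ⟪F - Ob, F - Ob⟫_ℝ - ⟪D - Ob, D - Ob⟫_ℝ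
      = ⟪F - Oc, F - Oc⟫_ℝ - ⟪D - Oc, D - Oc⟫_ℝ := by linarith [pFb, pFc]
  have qG1 : ⟪G - Oa, G - Oa⟫_ℝ - ⟪C - Oa, C - Oa⟫_ℝ
      = ⟪G - Ob, G - Ob⟫_ℝ - ⟪C - Ob, C - Ob⟫_ℝ := by linarith [pGa, pGb]
  have qG2 : ⟪G - Oc, G - Oc⟫_ℝ - ⟪A - Oc, A - Oc⟫_ℝ
      = ⟪G - Od, G - Od⟫_ℝ - ⟪A - Od, A - Od⟫_ℝ := by linarith [pGc, pGd]
  subst hM hN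
  rw [midpoint_eq_smul_add, midpoint_eq_smul_add]
  simp only [inner_sub_left, inner_sub_right, inner_add_left, inner_add_right,
    real_inner_smul_left, real_inner_smul_right, invOf_eq_inv] at qF1 qF2 qG1 qG2 fa1 fb1 fc1 fd1 fd2 ⊢
  linarith [qF1, qF2, qG1, qG2, fa1, fb1, fc1, fd1, fd2,
    real_inner_comm G Oa, real_inner_comm G Ob, real_inner_comm G Oc, real_inner_comm G Od,
    real_inner_comm F Oa, real_inner_comm F Ob, real_inner_comm F Oc, real_inner_comm F Od,
    real_inner_comm B Oa, real_inner_comm C Oa, real_inner_comm D Oa, real_inner_comm A Oa,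
    real_inner_comm B Ob, real_inner_comm C Ob, real_inner_comm D Ob, real_inner_comm A Ob,
    real_inner_comm B Oc, real_inner_comm C Oc, real_inner_comm D Oc, real_inner_comm A Oc,
    real_inner_comm B Od, real_inner_comm C Od, real_inner_comm D Od, real_inner_comm A Od]
end
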